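/- Let G be a connected finite simple graph with at least 2 vertices, let Z be a zero forcing set of L(G), let P_1,…,P_k be the associated forcing chains (induced paths in L(G)), ordered so that P_1,…,P_ℓ have at least 2 vertices and P_{ℓ+1},…,P_k have exactly 1 vertex, and let H be the spanning subgraph of G whose edge set is the union of the vertex sets of P_1,…,P_ℓ. Then the orientation of H in which an edge e = uv occurring as the j-th edge of the chain P_i is oriented from u to v whenever (j ≥ 2 and the (j−1)-th and j-th edges of P_i share the vertex u) or (j ≤ m_i − 1 and the j-th and (j+1)-th edges of P_i share the vertex v), is a well-defined acyclic orientation of H. -/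

import Mathlib

/-!
Write `rank e` for the position of the edge `e` in the forcing order and `T w`
(`lastIncidentRank σ w`) for the largest rank of an edge at the vertex `w`. If `p` forces `e` and
`u ∈ p ∩ e`, every other edge at `u` is a neighbour of `p` in the line graph, hence has smaller
rank than `e`; so `T u = rank e`. If `e` forces `g` and `u ∈ e \ g`, the same argument gives
`T u < rank g`. Hence `T` does not decrease along an arc `u → v` of the orientation, and it stays
constant only when `T u` is the rank of the arc itself. On a directed cycle `T` would be constant,
so two consecutive arcs would be one edge traversed in both directions. That is excluded because
the edges before and after a given edge of a chain are not adjacent in the line graph, the chain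
being an induced path.
-/
open SimpleGraph

/-- `σ` is an ordering of the vertices of `H` witnessing that its first `k` vertices form a
zero forcing set: every vertex at position `j ≥ k` is forced by some earlier vertex `σ i`,
i.e. `σ j` is the unique neighbor of `σ i` among `{σ j, σ (j+1), …}`. -/
def IsZeroForcingOrder {V : Type*} [Fintype V] (H : SimpleGraph V) (k : ℕ)
    (σ : Fin (Fintype.card V) ≃ V) : Prop :=
  ∀ j : Fin (Fintype.card V), k ≤ (j : ℕ) →
    ∃ i : Fin (Fintype.card V), (i : ℕ) < (j : ℕ) ∧
      ∀ l : Fin (Fintype.card V), (j : ℕ) ≤ (l : ℕ) → (H.Adj (σ i) (σ l) ↔ l = j)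

/-- With respect to the forcing order `σ` (whose first `k` vertices form the zero forcing set),
the vertex `a` forces the vertex `b`. -/
def Forces {V : Type*} [Fintype V] (H : SimpleGraph V) (k : ℕ)
    (σ : Fin (Fintype.card V) ≃ V) (a b : V) : Prop :=
  ∃ i j : Fin (Fintype.card V), σ i = a ∧ σ j = b ∧ (i : ℕ) < (j : ℕ) ∧ k ≤ (j : ℕ) ∧
    ∀ l : Fin (Fintype.card V), (j : ℕ) ≤ (l : ℕ) → (H.Adj a (σ l) ↔ l = j)

/-- The orientation of the subgraph `H` of `G` determined by the forcing chains
`P 0, …, P (k-1)` of the line graph of `G` (of which the first `ℓ` have at least two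
vertices): the edge `e = uv` occurring at (0-indexed) position `j` of the chain `P i` with
`i < ℓ` is oriented from `u` towards `v` if and only if the `(j-1)`-th and `j`-th edges of
`P i` share the vertex `u`, or the `j`-th and `(j+1)`-th edges of `P i` share the vertex `v`. -/
def chainOrientRel {V : Type*} (G : SimpleGraph V) (k ℓ : ℕ)
    (P : Fin k → List G.edgeSet) (u v : V) : Prop :=
  ∃ i : Fin k, (i : ℕ) < ℓ ∧ ∃ j : ℕ, ∃ e : G.edgeSet,
    (P i)[j]? = some e ∧ (e : Sym2 V) = s(u, v) ∧
      ((1 ≤ j ∧ ∃ e' : G.edgeSet, (P i)[j - 1]? = some e' ∧ u ∈ (e' : Sym2 V)) ∨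
       (∃ e' : G.edgeSet, (P i)[j + 1]? = some e' ∧ v ∈ (e' : Sym2 V)))

namespace List

variable {α : Type*} {l : List α} {i j : ℕ} {a b : α}

theorem IsChain.rel_of_getElem? {R : α → α → Prop} (h : l.IsChain R) (ha : l[j]? = some a)
    (hb : l[j + 1]? = some b) : R a b := by
  obtain ⟨-, rfl⟩ := getElem?_eq_some_iff.mp ha
  obtain ⟨hj, rfl⟩ := getElem?_eq_some_iff.mp hb
  exact h.getElem j hj

theorem Nodup.eq_of_getElem?_eq_some (hl : l.Nodup) (hi : l[i]? = some a)
    (hj : l[j]? = some a) : i = j :=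
  (getElem?_inj (getElem?_eq_some_iff.mp hi).1 hl).mp (hi.trans hj.symm)

theorem exists_getElem?_of_pair_infix (h : [a, b] <:+: l) :
    ∃ m, l[m]? = some a ∧ l[m + 1]? = some b := by
  obtain ⟨m, -, hm⟩ := infix_iff_getElem?.mp h
  exact ⟨m, by simpa using hm 0 (by simp), by simpa [add_comm] using hm 1 (by simp)⟩

theorem not_rel_of_getElem?_add_two {R : α → α → Prop} (hl : l.Nodup)
    (hind : ∀ a ∈ l, ∀ b ∈ l, R a b → [a, b] <:+: l ∨ [b, a] <:+: l)
    (ha : l[j]? = some a) (hb : l[j + 2]? = some b) : ¬ R a b := by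
  intro hab
  rcases hind a (mem_iff_getElem?.mpr ⟨_, ha⟩) b (mem_iff_getElem?.mpr ⟨_, hb⟩) hab with h | h
  · obtain ⟨m, hma, hmb⟩ := exists_getElem?_of_pair_infix h
    have := hl.eq_of_getElem?_eq_some hma ha
    have := hl.eq_of_getElem?_eq_some hmb hb
    omega
  · obtain ⟨m, hmb, hma⟩ := exists_getElem?_of_pair_infix h
    have := hl.eq_of_getElem?_eq_some hma ha
    have := hl.eq_of_getElem?_eq_some hmb hb
    omega

end List

namespace Relation

theorem not_transGen_self_of_monotone {α β : Type*} [Preorder β] {r : α → α → Prop} (f : α → β)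
    (hmono : ∀ a b, r a b → f a ≤ f b) (hstep : ∀ a b c, r a b → r b c → f c ≤ f a → False)
    (a : α) : ¬ TransGen r a a := by
  intro h
  obtain ⟨b, hab, hba⟩ := TransGen.head'_iff.mp h
  rcases hba.cases_head with rfl | ⟨c, hbc, hca⟩
  · exact hstep _ _ _ hab hab le_rfl
  · have hca' : ReflTransGen (· ≤ ·) (f c) (f a) := hca.lift f hmono
    rw [reflTransGen_eq_self] at hca'
    exact hstep a b c hab hbc hca'

end Relation

section Forces

variable {E : Type*} [Fintype E] {H : SimpleGraph E} {k : ℕ} {σ : Fin (Fintype.card E) ≃ E}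
  {a b x : E}

theorem Forces.adj (h : Forces H k σ a b) : H.Adj a b := by
  obtain ⟨i, j, rfl, rfl, -, -, huniq⟩ := h
  exact (huniq j le_rfl).mpr rfl

theorem Forces.symm_lt (h : Forces H k σ a b) : σ.symm a < σ.symm b := by
  obtain ⟨i, j, rfl, rfl, hij, -⟩ := h
  simpa using hij

theorem Forces.symm_lt_of_adj (h : Forces H k σ a b) (hx : H.Adj a x) (hxb : x ≠ b) :
    σ.symm x < σ.symm b := by
  obtain ⟨i, j, rfl, rfl, -, -, huniq⟩ := h
  by_contra! hle
  rw [Equiv.symm_apply_apply] at hle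
  exact hxb (by simpa using congrArg σ ((huniq (σ.symm x) hle).mp (by simpa using hx)))

end Forces

namespace SimpleGraph

variable {V : Type*} {G : SimpleGraph V} {u v w : V}

theorem edgeSet_eq_of_mem_of_mem {e x : G.edgeSet} (he : (e : Sym2 V) = s(u, v))
    (hu : u ∈ (x : Sym2 V)) (hv : v ∈ (x : Sym2 V)) : x = e := by
  have huv : G.Adj u v := by simpa [he] using e.prop
  exact Subtype.ext (((Sym2.mem_and_mem_iff huv.ne).mp ⟨hu, hv⟩).trans he.symm)

variable [Fintype G.edgeSet] {k : ℕ} {σ : Fin (Fintype.card G.edgeSet) ≃ G.edgeSet}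
  {a b e : G.edgeSet}

theorem _root_.Forces.symm_lt_of_mem {x : G.edgeSet} (h : Forces G.lineGraph k σ a b)
    (hua : u ∈ (a : Sym2 V)) (hux : u ∈ (x : Sym2 V)) (hxb : x ≠ b) : σ.symm x < σ.symm b := by
  by_cases hxa : x = a
  · exact hxa ▸ h.symm_lt
  · exact h.symm_lt_of_adj (lineGraph_adj_iff_exists.mpr ⟨Ne.symm hxa, u, hua, hux⟩) hxb

variable [DecidableEq V]

def lastIncidentRank (σ : Fin (Fintype.card G.edgeSet) ≃ G.edgeSet) (w : V) : ℕ :=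
  ({e | w ∈ (e : Sym2 V)} : Finset G.edgeSet).sup fun e => σ.symm e

theorem symm_le_lastIncidentRank (hw : w ∈ (e : Sym2 V)) :
    (σ.symm e : ℕ) ≤ lastIncidentRank σ w :=
  Finset.le_sup (f := fun e => (σ.symm e : ℕ)) (by simpa using hw)

theorem lastIncidentRank_eq_of_forces (h : Forces G.lineGraph k σ a b) (ha : u ∈ (a : Sym2 V))
    (hb : u ∈ (b : Sym2 V)) : lastIncidentRank σ u = σ.symm b := by
  refine le_antisymm (Finset.sup_le fun x hx => ?_) (symm_le_lastIncidentRank hb)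
  by_cases hxb : x = b
  · rw [hxb]
  · exact (h.symm_lt_of_mem ha (by simpa using hx) hxb).le

theorem lastIncidentRank_lt_of_forces (h : Forces G.lineGraph k σ a b) (ha : u ∈ (a : Sym2 V))
    (hb : u ∉ (b : Sym2 V)) : lastIncidentRank σ u < σ.symm b := by
  have hpos : ⊥ < (σ.symm b : ℕ) := Nat.zero_lt_of_lt h.symm_lt
  refine (Finset.sup_lt_iff hpos).mpr fun x hx => ?_
  replace hx : u ∈ (x : Sym2 V) := by simpa using hx
  exact h.symm_lt_of_mem ha hx (by rintro rfl; exact hb hx)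

end SimpleGraph

section ChainOrientation

variable {V : Type*} {G : SimpleGraph V} {k ℓ : ℕ} {P : Fin k → List G.edgeSet} {u v : V}

theorem chainOrientRel_or_of_mem {i : Fin k} {e : G.edgeSet}
    (hadj : (P i).IsChain G.lineGraph.Adj) (hi : (i : ℕ) < ℓ) (hlen : 2 ≤ (P i).length)
    (he : e ∈ P i) (huv : (e : Sym2 V) = s(u, v)) :
    chainOrientRel G k ℓ P u v ∨ chainOrientRel G k ℓ P v u := by
  have hvu : (e : Sym2 V) = s(v, u) := huv.trans Sym2.eq_swap
  obtain ⟨j, hej⟩ := List.mem_iff_getElem?.mp he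
  have hj := (List.getElem?_eq_some_iff.mp hej).1
  by_cases hnext : j + 1 < (P i).length
  · have hg : (P i)[j + 1]? = some (P i)[j + 1] := List.getElem?_eq_getElem hnext
    obtain ⟨-, w, hwe, hwg⟩ := lineGraph_adj_iff_exists.mp (hadj.rel_of_getElem? hej hg)
    rcases Sym2.mem_iff.mp (huv ▸ hwe) with rfl | rfl
    · exact .inr ⟨i, hi, j, e, hej, hvu, .inr ⟨_, hg, hwg⟩⟩
    · exact .inl ⟨i, hi, j, e, hej, huv, .inr ⟨_, hg, hwg⟩⟩
  · obtain ⟨m, rfl⟩ : ∃ m, j = m + 1 := ⟨j - 1, by omega⟩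
    have hp : (P i)[m]? = some (P i)[m] := List.getElem?_eq_getElem (by omega)
    obtain ⟨-, w, hwp, hwe⟩ := lineGraph_adj_iff_exists.mp (hadj.rel_of_getElem? hp hej)
    rcases Sym2.mem_iff.mp (huv ▸ hwe) with rfl | rfl
    · exact .inl ⟨i, hi, m + 1, e, hej, huv, .inl ⟨by omega, _, hp, hwp⟩⟩
    · exact .inr ⟨i, hi, m + 1, e, hej, hvu, .inl ⟨by omega, _, hp, hwp⟩⟩

theorem chainOrientRel_asymm (hnodup : ∀ i : Fin k, (P i).Nodup)
    (hpart : ∀ e : G.edgeSet, ∃! i : Fin k, e ∈ P i)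
    (hind : ∀ i : Fin k, ∀ a ∈ P i, ∀ b ∈ P i,
      G.lineGraph.Adj a b → ([a, b] <:+: P i ∨ [b, a] <:+: P i))
    (h : chainOrientRel G k ℓ P u v) : ¬ chainOrientRel G k ℓ P v u := by
  rintro ⟨i', -, j', e', hej', he', hvu⟩
  obtain ⟨i, -, j, e, hej, he, huv⟩ := h
  obtain rfl : e = e' := Subtype.ext (he.trans (he'.trans Sym2.eq_swap).symm)
  obtain rfl : i = i' :=
    (hpart e).unique (List.mem_iff_getElem?.mpr ⟨_, hej⟩) (List.mem_iff_getElem?.mpr ⟨_, hej'⟩)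
  obtain rfl : j = j' := (hnodup i).eq_of_getElem?_eq_some hej hej'
  have eq_of_mem_mem : ∀ {m : ℕ} {x : G.edgeSet}, (P i)[m]? = some x →
      u ∈ (x : Sym2 V) → v ∈ (x : Sym2 V) → m = j := fun hx hu hv =>
    (hnodup i).eq_of_getElem?_eq_some (edgeSet_eq_of_mem_of_mem he hu hv ▸ hx) hej
  have nbrs_disjoint : ∀ {w : V} {p g : G.edgeSet}, 1 ≤ j → (P i)[j - 1]? = some p →
      (P i)[j + 1]? = some g → w ∈ (p : Sym2 V) → w ∈ (g : Sym2 V) → False := by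
    intro w p g hj hp hg hwp hwg
    rw [show j + 1 = j - 1 + 2 by omega] at hg
    have hpg : p ≠ g := by
      rintro rfl
      have := (hnodup i).eq_of_getElem?_eq_some hp hg
      omega
    exact List.not_rel_of_getElem?_add_two (hnodup i) (hind i) hp hg
      (lineGraph_adj_iff_exists.mpr ⟨hpg, w, hwp, hwg⟩)
  rcases huv with ⟨hj, p, hp, hup⟩ | ⟨g, hg, hvg⟩ <;>
    rcases hvu with ⟨hj', p', hp', hvp'⟩ | ⟨g', hg', hug'⟩
  · cases hp.symm.trans hp'
    have := eq_of_mem_mem hp hup hvp'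
    omega
  · exact nbrs_disjoint hj hp hg' hup hug'
  · exact nbrs_disjoint hj' hp' hg hvp' hvg
  · cases hg.symm.trans hg'
    have := eq_of_mem_mem hg hug' hvg
    omega

variable [Fintype G.edgeSet] [DecidableEq V] {σ : Fin (Fintype.card G.edgeSet) ≃ G.edgeSet}

theorem exists_lastIncidentRank_eq_or_lt_of_chainOrientRel
    (hchain : ∀ i : Fin k, (P i).IsChain (Forces G.lineGraph k σ))
    (h : chainOrientRel G k ℓ P u v) :
    ∃ e : G.edgeSet, (e : Sym2 V) = s(u, v) ∧
      (lastIncidentRank σ u = σ.symm e ∨ lastIncidentRank σ u < lastIncidentRank σ v) := by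
  obtain ⟨i, -, j, e, hej, he, hprev | ⟨g, hg, hvg⟩⟩ := h
  · obtain ⟨hj, p, hp, hup⟩ := hprev
    obtain ⟨m, rfl⟩ : ∃ m, j = m + 1 := ⟨j - 1, by omega⟩
    have hue : u ∈ (e : Sym2 V) := he ▸ Sym2.mem_mk_left u v
    have hforces := (hchain i).rel_of_getElem? hp hej
    exact ⟨e, he, .inl (lastIncidentRank_eq_of_forces hforces hup hue)⟩
  · have hforces := (hchain i).rel_of_getElem? hej hg
    have hug : u ∉ (g : Sym2 V) := fun hug =>
      (edgeSet_eq_of_mem_of_mem he hug hvg ▸ hforces.symm_lt).false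
    refine ⟨e, he, .inr ?_⟩
    calc lastIncidentRank σ u < σ.symm g :=
          lastIncidentRank_lt_of_forces hforces (he ▸ Sym2.mem_mk_left u v) hug
      _ ≤ lastIncidentRank σ v := symm_le_lastIncidentRank hvg

theorem not_transGen_chainOrientRel
    (hchain : ∀ i : Fin k, (P i).IsChain (Forces G.lineGraph k σ))
    (hasymm : ∀ u v : V, chainOrientRel G k ℓ P u v → ¬ chainOrientRel G k ℓ P v u) (v : V) :
    ¬ Relation.TransGen (chainOrientRel G k ℓ P) v v := by
  have hmono : ∀ u v, chainOrientRel G k ℓ P u v →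
      lastIncidentRank σ u ≤ lastIncidentRank σ v := by
    intro u v h
    obtain ⟨e, he, heq | hlt⟩ := exists_lastIncidentRank_eq_or_lt_of_chainOrientRel hchain h
    · exact heq ▸ symm_le_lastIncidentRank (he ▸ Sym2.mem_mk_right u v)
    · exact hlt.le
  refine Relation.not_transGen_self_of_monotone (lastIncidentRank σ) hmono ?_ v
  intro u v w huv hvw hwu
  have h₁ := hmono u v huv
  have h₂ := hmono v w hvw
  obtain ⟨e, he, heq | hlt⟩ := exists_lastIncidentRank_eq_or_lt_of_chainOrientRel hchain huv
  · obtain ⟨e', he', heq' | hlt'⟩ := exists_lastIncidentRank_eq_or_lt_of_chainOrientRel hchain hvw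
    · obtain rfl : e' = e := σ.symm.injective (Fin.ext (by omega))
      obtain rfl : w = u := by
        rcases Sym2.eq_iff.mp (he'.symm.trans he) with ⟨h₁, h₂⟩ | ⟨-, h₂⟩
        exacts [h₂.trans h₁, h₂]
      exact hasymm w v huv hvw
    · omega
  · omega

end ChainOrientation

theorem chainOrientation_wellDefined_acyclic_general
    {V : Type*} [Fintype V] [DecidableEq V]
    (G : SimpleGraph V) [DecidableRel G.Adj]
    (k ℓ : ℕ)
    (σ : Fin (Fintype.card G.edgeSet) ≃ G.edgeSet)
    (P : Fin k → List G.edgeSet)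
    (hnodup : ∀ i : Fin k, (P i).Nodup)
    (hpart : ∀ e : G.edgeSet, ∃! i : Fin k, e ∈ P i)
    (hchain : ∀ i : Fin k, (P i).Chain' (Forces G.lineGraph k σ))
    (hind : ∀ i : Fin k, ∀ a ∈ P i, ∀ b ∈ P i,
      G.lineGraph.Adj a b → ([a, b] <:+: P i ∨ [b, a] <:+: P i))
    (hlen : ∀ i : Fin k,
      ((i : ℕ) < ℓ → 2 ≤ (P i).length) ∧ (ℓ ≤ (i : ℕ) → (P i).length = 1)) :
    (∀ u v : V,
        (∃ i : Fin k, (i : ℕ) < ℓ ∧ ∃ e ∈ P i, (e : Sym2 V) = s(u, v)) →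
          (chainOrientRel G k ℓ P u v ∨ chainOrientRel G k ℓ P v u)) ∧
    (∀ u v : V, chainOrientRel G k ℓ P u v → ¬ chainOrientRel G k ℓ P v u) ∧
    (∀ v : V, ¬ Relation.TransGen (chainOrientRel G k ℓ P) v v) := by
  have hasymm : ∀ u v : V, chainOrientRel G k ℓ P u v → ¬ chainOrientRel G k ℓ P v u :=
    fun _ _ => chainOrientRel_asymm hnodup hpart hind
  refine ⟨?_, hasymm, not_transGen_chainOrientRel hchain hasymm⟩
  rintro u v ⟨i, hi, e, he, huv⟩
  exact chainOrientRel_or_of_mem ((hchain i).imp fun _ _ h => h.adj) hi ((hlen i).1 hi) he huv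

/-- The orientation of the spanning subgraph `H` of `G` (whose edges are the union of the
vertex sets of the forcing chains `P 0, …, P (ℓ-1)` of the line graph of `G`) given by
`chainOrientRel` is well defined (every edge of `H` receives exactly one direction) and
acyclic. -/
theorem chainOrientation_wellDefined_acyclic
    {V : Type*} [Fintype V] [DecidableEq V]
    (G : SimpleGraph V) [DecidableRel G.Adj]
    (hconn : G.Connected) (hcard : 2 ≤ Fintype.card V)
    (k ℓ : ℕ) (hℓk : ℓ ≤ k) (hk : k ≤ Fintype.card G.edgeSet)
    (σ : Fin (Fintype.card G.edgeSet) ≃ G.edgeSet)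
    (hσ : IsZeroForcingOrder G.lineGraph k σ)
    (P : Fin k → List G.edgeSet)
    (hhead : ∀ i : Fin k, (P i).head? = some (σ ⟨(i : ℕ), lt_of_lt_of_le i.isLt hk⟩))
    (hnodup : ∀ i : Fin k, (P i).Nodup)
    (hpart : ∀ e : G.edgeSet, ∃! i : Fin k, e ∈ P i)
    (hchain : ∀ i : Fin k, (P i).Chain' (Forces G.lineGraph k σ))
    (hind : ∀ i : Fin k, ∀ a ∈ P i, ∀ b ∈ P i,
      G.lineGraph.Adj a b → ([a, b] <:+: P i ∨ [b, a] <:+: P i))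
    (hlen : ∀ i : Fin k,
      ((i : ℕ) < ℓ → 2 ≤ (P i).length) ∧ (ℓ ≤ (i : ℕ) → (P i).length = 1)) :
    (∀ u v : V,
        (∃ i : Fin k, (i : ℕ) < ℓ ∧ ∃ e ∈ P i, (e : Sym2 V) = s(u, v)) →
          (chainOrientRel G k ℓ P u v ∨ chainOrientRel G k ℓ P v u)) ∧
    (∀ u v : V, chainOrientRel G k ℓ P u v → ¬ chainOrientRel G k ℓ P v u) ∧
    (∀ v : V, ¬ Relation.TransGen (chainOrientRel G k ℓ P) v v) :=
  chainOrientation_wellDefined_acyclic_general G k ℓ σ P hnodup hpart hchain hind hlen
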